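/- arXiv:0712.2309 — 2 statements merged into one kernel-verified Lean document; each statement's English description precedes it below -/
import Mathlib

section
/- For any n and d with 2 * n^{d-2} > 3^d - 1, it is impossible to attack all board positions of the d-dimensional chess space of size n using just n queens; formally, if d ≥ 2 and 2 * n^{d-2} > 3^d - 1, then for every finite set Q of board positions with |Q| ≤ n there exists a board position x : Fin d → Fin n that is not in Q and is not attacked by any queen in Q. -/
/-- An attack vector in a `d`-dimensional chess space: a function `δ : Fin d → ℤ`
with every component in `{-1, 0, 1}` and not identically zero. -/
def IsAttackVector (d : ℕ) (δ : Fin d → ℤ) : Prop :=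
  (∀ i, δ i ∈ ({-1, 0, 1} : Set ℤ)) ∧ δ ≠ 0

/-- A queen at `q` attacks a board position `x` if `x ≠ q` and `x` lies at a
positive scalar distance from `q` along some attack vector. -/
def Attacks {n d : ℕ} (q x : Fin d → Fin n) : Prop :=
  x ≠ q ∧ ∃ δ : Fin d → ℤ, IsAttackVector d δ ∧
    ∃ s : ℤ, 0 < s ∧ ∀ i, (x i : ℤ) = (q i : ℤ) + s * δ i

/-!
A queen at `q` attacks only along the `(3 ^ d - 1) / 2` lines `q + ℤ δ`, and each such line
meets the board in at most `n` points, one of them `q` itself (a coordinate with `δ i ≠ 0` moves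
injectively along the line). Hence `n` queens cover at most `n (1 + (3 ^ d - 1) (n - 1) / 2)`
positions, fewer than the `n ^ d` of the board once `2 n ^ (d - 2) ≥ 3 ^ d`.
-/

open Finset

def attackVectors (d : ℕ) : Finset (Fin d → ℤ) :=
  (Fintype.piFinset fun _ => ({-1, 0, 1} : Finset ℤ)).erase 0

lemma mem_attackVectors {d : ℕ} {δ : Fin d → ℤ} : δ ∈ attackVectors d ↔ IsAttackVector d δ := by
  simp [attackVectors, IsAttackVector, and_comm]

lemma card_attackVectors (d : ℕ) : #(attackVectors d) = 3 ^ d - 1 := by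
  simp [attackVectors]

lemma neg_mem_attackVectors {d : ℕ} {δ : Fin d → ℤ} (hδ : δ ∈ attackVectors d) :
    -δ ∈ attackVectors d := by
  simp only [mem_attackVectors, IsAttackVector] at hδ ⊢
  refine ⟨fun i => ?_, neg_ne_zero.mpr hδ.2⟩
  have hi := hδ.1 i
  simp only [Set.mem_insert_iff, Set.mem_singleton_iff, Pi.neg_apply] at hi ⊢
  omega

section Rays

variable {n d : ℕ}

open Classical in
noncomputable def ray (q : Fin d → Fin n) (δ : Fin d → ℤ) : Finset (Fin d → Fin n) :=
  univ.filter fun x => ∃ s : ℤ, 0 < s ∧ ∀ i, (x i : ℤ) = q i + s * δ i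

open Classical in
noncomputable def attackedBy (q : Fin d → Fin n) : Finset (Fin d → Fin n) :=
  univ.filter (Attacks q)

lemma mem_ray {q x : Fin d → Fin n} {δ : Fin d → ℤ} :
    x ∈ ray q δ ↔ ∃ s : ℤ, 0 < s ∧ ∀ i, (x i : ℤ) = q i + s * δ i := by
  simp [ray]

lemma mem_attackedBy {q x : Fin d → Fin n} : x ∈ attackedBy q ↔ Attacks q x := by
  simp [attackedBy]

lemma attackedBy_subset_biUnion_ray (q : Fin d → Fin n) :
    attackedBy q ⊆ (attackVectors d).biUnion (ray q) := by
  intro x hx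
  obtain ⟨-, δ, hδ, hray⟩ := mem_attackedBy.mp hx
  exact mem_biUnion.mpr ⟨δ, mem_attackVectors.mpr hδ, mem_ray.mpr hray⟩

lemma disjoint_ray_neg (q : Fin d → Fin n) {δ : Fin d → ℤ} (hδ : δ ≠ 0) :
    Disjoint (ray q δ) (ray q (-δ)) := by
  refine disjoint_left.mpr fun x hx hx' => hδ (funext fun i => ?_)
  obtain ⟨s, hs, hxs⟩ := mem_ray.mp hx
  obtain ⟨t, ht, hxt⟩ := mem_ray.mp hx'
  have hsum : (s + t) * δ i = 0 := by
    have := hxt i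
    rw [Pi.neg_apply] at this
    linear_combination this - hxs i
  exact (mul_eq_zero.mp hsum).resolve_left (by omega)

lemma exists_of_mem_ray_union_ray_neg {q x : Fin d → Fin n} {δ : Fin d → ℤ}
    (hx : x ∈ ray q δ ∪ ray q (-δ)) : ∃ s : ℤ, s ≠ 0 ∧ ∀ i, (x i : ℤ) = q i + s * δ i := by
  rcases mem_union.mp hx with hx | hx <;> obtain ⟨s, hs, hxs⟩ := mem_ray.mp hx
  · exact ⟨s, hs.ne', hxs⟩
  · exact ⟨-s, by omega, fun i => by simpa using hxs i⟩

lemma card_ray_add_card_ray_neg_le (q : Fin d → Fin n) {δ : Fin d → ℤ} (hδ : δ ≠ 0) :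
    #(ray q δ) + #(ray q (-δ)) ≤ n - 1 := by
  obtain ⟨i, hi⟩ := Function.ne_iff.mp hδ
  rw [← card_union_of_disjoint (disjoint_ray_neg q hδ)]
  calc #(ray q δ ∪ ray q (-δ)) ≤ #(univ.erase (q i)) := by
        refine card_le_card_of_injOn (· i) (fun x hx => ?_) (fun x hx y hy hxy => ?_)
        · obtain ⟨s, hs, hxs⟩ := exists_of_mem_ray_union_ray_neg hx
          refine mem_erase.mpr ⟨fun h => ?_, mem_univ _⟩
          have := hxs i
          rw [show x i = q i from h, left_eq_add, mul_eq_zero] at this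
          exact this.elim hs hi
        · obtain ⟨s, -, hxs⟩ := exists_of_mem_ray_union_ray_neg hx
          obtain ⟨t, -, hyt⟩ := exists_of_mem_ray_union_ray_neg hy
          have hst : s = t := by
            have := congrArg (fun a : Fin n => (a : ℤ)) hxy
            simp only [hxs i, hyt i, add_right_inj] at this
            exact mul_right_cancel₀ hi this
          funext j
          exact Fin.ext (by exact_mod_cast (hxs j).trans (hst ▸ hyt j).symm)
    _ = n - 1 := by simp

lemma two_mul_card_attackedBy_le (q : Fin d → Fin n) :
    2 * #(attackedBy q) ≤ (3 ^ d - 1) * (n - 1) := by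
  set D := attackVectors d
  have hneg : ∑ δ ∈ D, #(ray q (-δ)) = ∑ δ ∈ D, #(ray q δ) :=
    sum_nbij' Neg.neg Neg.neg (fun _ => neg_mem_attackVectors) (fun _ => neg_mem_attackVectors)
      (fun δ _ => neg_neg δ) (fun δ _ => neg_neg δ) (fun _ _ => rfl)
  calc 2 * #(attackedBy q) ≤ 2 * ∑ δ ∈ D, #(ray q δ) :=
        Nat.mul_le_mul_left 2 ((card_le_card (attackedBy_subset_biUnion_ray q)).trans card_biUnion_le)
    _ = ∑ δ ∈ D, (#(ray q δ) + #(ray q (-δ))) := by rw [sum_add_distrib, hneg, two_mul]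
    _ ≤ ∑ _δ ∈ D, (n - 1) :=
        sum_le_sum fun δ hδ => card_ray_add_card_ray_neg_le q (mem_attackVectors.mp hδ).2
    _ = (3 ^ d - 1) * (n - 1) := by rw [sum_const, card_attackVectors, smul_eq_mul]

lemma two_mul_card_insert_attackedBy_le (hd : 0 < d) (q : Fin d → Fin n) :
    2 * #(insert q (attackedBy q)) ≤ (3 ^ d - 1) * n := by
  have hn : 0 < n := Fin.pos (q ⟨0, hd⟩)
  have h3 : 3 ≤ 3 ^ d := Nat.le_self_pow hd.ne' 3
  have hq := two_mul_card_attackedBy_le q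
  have hins := card_insert_le q (attackedBy q)
  obtain ⟨m, rfl⟩ : ∃ m, n = m + 1 := ⟨n - 1, by omega⟩
  rw [Nat.add_sub_cancel] at hq
  rw [mul_add, mul_one]
  omega

end Rays

theorem n_queens_do_not_suffice (n d : ℕ) (hd : 2 ≤ d)
    (h : 2 * n ^ (d - 2) > 3 ^ d - 1)
    (Q : Finset (Fin d → Fin n)) (hQ : Q.card ≤ n) :
    ∃ x : Fin d → Fin n, x ∉ Q ∧ ∀ q ∈ Q, ¬ Attacks q x := by
  have hn : 0 < n := by
    by_contra! hn
    obtain rfl : n = 0 := by omega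
    have : 3 ^ 2 ≤ 3 ^ d := Nat.pow_le_pow_right (by norm_num) hd
    have : 0 ^ (d - 2) ≤ 1 := pow_le_one₀ le_rfl zero_le_one
    omega
  set covered := Q.biUnion fun q => insert q (attackedBy q)
  have hcovered : 2 * #covered ≤ (3 ^ d - 1) * n ^ 2 :=
    calc 2 * #covered ≤ ∑ q ∈ Q, 2 * #(insert q (attackedBy q)) := by
          rw [← mul_sum]; exact Nat.mul_le_mul_left 2 card_biUnion_le
      _ ≤ #Q * ((3 ^ d - 1) * n) := sum_le_card_nsmul _ _ _ fun q _ =>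
          two_mul_card_insert_attackedBy_le (by omega) q
      _ ≤ n * ((3 ^ d - 1) * n) := Nat.mul_le_mul_right _ hQ
      _ = (3 ^ d - 1) * n ^ 2 := by ring
  have hboard : #covered < #(univ : Finset (Fin d → Fin n)) := by
    have hsplit : n ^ d = n ^ (d - 2) * n ^ 2 := by rw [← pow_add, Nat.sub_add_cancel hd]
    simp only [card_univ, Fintype.card_fun, Fintype.card_fin, hsplit]
    nlinarith [pow_pos hn 2]
  obtain ⟨x, -, hx⟩ := exists_mem_notMem_of_card_lt_card hboard
  simp only [covered, mem_biUnion, mem_insert, mem_attackedBy, not_exists, not_and, not_or] at hx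
  exact ⟨x, fun hxQ => (hx x hxQ).1 rfl, fun q hq => (hx q hq).2⟩
end

section
/- For any natural number k, there exist a dimension d and a board size n such that n^k queens do not suffice to attack all board positions; formally, for every k there exist d and n such that for every finite set Q of board positions of the d-dimensional chess space of size n with |Q| ≤ n^k, some board position x : Fin d → Fin n is neither in Q nor attacked by any queen in Q. -/
/-!
Every position that a queen at `q` occupies or attacks is of the form `q + s • δ` with
`0 ≤ s < n` and `δ ∈ {-1, 0, 1}ᵈ`, so one queen covers at most `3 ^ d * n` of the `n ^ d`
positions. With `d = k + 2` and `n = 3 ^ d + 1`, the `n ^ k` queens cover at most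
`n ^ k * 3 ^ d * n < n ^ (k + 2)` of them.
-/

open Finset

variable {n d : ℕ}

open Classical in
noncomputable def queenRange (q : Fin d → Fin n) : Finset (Fin d → Fin n) :=
  univ.filter fun x => x = q ∨ Attacks q x

lemma Attacks.exists_eq_add_mul {q x : Fin d → Fin n} (h : Attacks q x) :
    ∃ δ : Fin d → Fin 3, ∃ s : Fin n, ∀ i, (x i : ℤ) = q i + s * ((δ i : ℤ) - 1) := by
  obtain ⟨-, δ, ⟨hδ, hδ0⟩, s, hs, hx⟩ := h
  have hδ' : ∀ i, δ i = -1 ∨ δ i = 0 ∨ δ i = 1 := by simpa using hδ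
  obtain ⟨i, hi⟩ : ∃ i, δ i ≠ 0 := Function.ne_iff.mp hδ0
  have hsn : s.toNat < n := by
    have := hx i
    have := (x i).isLt
    have := (q i).isLt
    rcases hδ' i with h | h | h <;> simp only [h] at * <;> omega
  refine ⟨fun i => ⟨(δ i + 1).toNat, by rcases hδ' i with h | h | h <;> simp [h]⟩,
    ⟨s.toNat, hsn⟩, fun i => ?_⟩
  rw [hx i]
  rcases hδ' i with h | h | h <;> simp [h, hs.le]

lemma card_queenRange_le (hn : 0 < n) (q : Fin d → Fin n) : #(queenRange q) ≤ 3 ^ d * n := by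
  classical
  let coords : (Fin d → Fin n) → Fin d → ℤ := fun x i => x i
  have hcoords : Function.Injective coords := fun x y h =>
    funext fun i => Fin.ext (Int.ofNat_inj.mp (congrFun h i))
  calc #(queenRange q) = #((queenRange q).image coords) := (card_image_of_injective _ hcoords).symm
    _ ≤ #(univ : Finset ((Fin d → Fin 3) × Fin n)) := by
      refine card_le_card_of_surjOn (fun p i => q i + p.2 * ((p.1 i : ℤ) - 1)) ?_
      intro _ hy
      obtain ⟨x, hx, rfl⟩ := mem_image.mp hy
      rcases (mem_filter.mp hx).2 with rfl | hattack
      · exact ⟨(fun _ => 1, ⟨0, hn⟩), mem_coe.mpr (mem_univ _), by simp [coords]⟩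
      · obtain ⟨δ, s, hδs⟩ := hattack.exists_eq_add_mul
        exact ⟨(δ, s), mem_coe.mpr (mem_univ _), funext fun i => (hδs i).symm⟩
    _ = 3 ^ d * n := by simp

lemma exists_unattacked_of_card_mul_lt (hn : 0 < n) (Q : Finset (Fin d → Fin n))
    (hQ : #Q * (3 ^ d * n) < n ^ d) : ∃ x, x ∉ Q ∧ ∀ q ∈ Q, ¬ Attacks q x := by
  classical
  by_contra! hcovered
  have huniv : (univ : Finset (Fin d → Fin n)) ⊆ Q.biUnion queenRange := fun x _ => by
    by_cases hxQ : x ∈ Q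
    · exact mem_biUnion.mpr ⟨x, hxQ, by simp [queenRange]⟩
    · obtain ⟨q, hq, hattack⟩ := hcovered x hxQ
      exact mem_biUnion.mpr ⟨q, hq, by simp [queenRange, hattack]⟩
  have := calc n ^ d = #(univ : Finset (Fin d → Fin n)) := by simp
    _ ≤ #(Q.biUnion queenRange) := card_le_card huniv
    _ ≤ #Q * (3 ^ d * n) := card_biUnion_le_card_mul _ _ _ fun q _ => card_queenRange_le hn q
  omega

theorem exists_board_nk_queens_insufficient (k : ℕ) :
    ∃ d n : ℕ, ∀ Q : Finset (Fin d → Fin n), Q.card ≤ n ^ k →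
      ∃ x : Fin d → Fin n, x ∉ Q ∧ ∀ q ∈ Q, ¬ Attacks q x := by
  set n := 3 ^ (k + 2) + 1
  refine ⟨k + 2, n, fun Q hQ => exists_unattacked_of_card_mul_lt (by positivity) Q ?_⟩
  calc #Q * (3 ^ (k + 2) * n) ≤ n ^ k * (3 ^ (k + 2) * n) := Nat.mul_le_mul_right _ hQ
    _ < n ^ k * (n * n) := by gcongr; omega
    _ = n ^ (k + 2) := by ring
end
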